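/- For all BCCSP processes p1 and p2: p1 ⊑_UPW p2 (i.e. PW_U(p1) ⊆ PW_U(p2)) if and only if dBGO_U(p1) ⊆ dBGO_U(p2). -/
import Mathlib


/-- BCCSP processes over a set `Act` of actions. -/
inductive Proc (Act : Type) : Type where
  | nil : Proc Act
  | pre : Act → Proc Act → Proc Act
  | choice : Proc Act → Proc Act → Proc Act

/-- The transition relation of BCCSP. -/
inductive Proc.Step {Act : Type} : Proc Act → Act → Proc Act → Prop where
  | pre (a : Act) (p : Proc Act) : Proc.Step (Proc.pre a p) a p
  | left {p p' : Proc Act} {a : Act} (q : Proc Act) :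
      Proc.Step p a p' → Proc.Step (Proc.choice p q) a p'
  | right (p : Proc Act) {q q' : Proc Act} {a : Act} :
      Proc.Step q a q' → Proc.Step (Proc.choice p q) a q'

/-- The initial offer of a process. -/
def Proc.initials {Act : Type} (p : Proc Act) : Set Act :=
  {a | ∃ p', Proc.Step p a p'}

/-- Multi-step transitions: `p ⇒α q`. -/
inductive Proc.Steps {Act : Type} : Proc Act → List Act → Proc Act → Prop where
  | refl (p : Proc Act) : Proc.Steps p [] p
  | cons {p p' p'' : Proc Act} {a : Act} {α : List Act} :
      Proc.Step p a p' → Proc.Steps p' α p'' → Proc.Steps p (a :: α) p''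

/-- Branching general observations: finite trees with nodes labeled in `Λ`
and arcs labeled by actions in `Act`. -/
inductive Obs (Act Λ : Type) : Type where
  | node : Λ → List (Act × Obs Act Λ) → Obs Act Λ

/-- Membership `b ∈ BGO_L(p)`:
`BGO_L(p) = {⟨L(p), S⟩ | S ⊆ {(a, b) | p →a p', b ∈ BGO_L(p')}}`. -/
def InBGO {Act Λ : Type} (L : Proc Act → Λ) : Obs Act Λ → Proc Act → Prop
  | Obs.node l S, p =>
      l = L p ∧ ∀ a b, (a, b) ∈ S → ∃ p', Proc.Step p a p' ∧ InBGO L b p'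
termination_by b _ => sizeOf b
decreasing_by
  have h1 : sizeOf (a, b) < sizeOf S := List.sizeOf_lt_of_mem (by assumption)
  simp at h1 ⊢
  omega

/-- A process is deterministic if at every reachable state, the `a`-derivative
is unique (for each action `a`). -/
def Deterministic {Act : Type} (p : Proc Act) : Prop :=
  ∀ (α : List Act) (r : Proc Act), Proc.Steps p α r →
    ∀ (a : Act) (r₁ r₂ : Proc Act), Proc.Step r a r₁ → Proc.Step r a r₂ → r₁ = r₂

/-- `S` is a plain simulation. -/
def IsSim {Act : Type} (S : Proc Act → Proc Act → Prop) : Prop :=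
  ∀ p q, S p q →
    ∀ a p', Proc.Step p a p' → ∃ q', Proc.Step q a q' ∧ S p' q'

/-- The simulation preorder `p ⊑_S q`. -/
def Sle {Act : Type} (p q : Proc Act) : Prop :=
  ∃ S, IsSim S ∧ S p q

/-- The set of partial possible worlds of `p`. -/
def PWU {Act : Type} (p : Proc Act) : Set (Proc Act) :=
  {q | Deterministic q ∧ Sle q p}

/-- A branching observation is deterministic if at every node no two
outgoing arcs carry the same action. -/
def DetObs {Act Λ : Type} : Obs Act Λ → Prop
  | Obs.node _ S =>
      (∀ x ∈ S, ∀ y ∈ S, x.1 = y.1 → x.2 = y.2) ∧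
      ∀ a b, (a, b) ∈ S → DetObs b
termination_by b => sizeOf b
decreasing_by
  have h1 : sizeOf (a, b) < sizeOf S := List.sizeOf_lt_of_mem (by assumption)
  simp at h1 ⊢
  omega

/-- The trivial local observer `L_U`, with a one-point label set. -/
def LU {Act : Type} : Proc Act → Unit := fun _ => ()


section Aux

variable {Act : Type}

theorem step_sizeOf {p p' : Proc Act} {a : Act} (h : Proc.Step p a p') :
    sizeOf p' < sizeOf p := by
  induction h with
  | pre a p => simp
  | left q h ih => simp; omega
  | right p h ih => simp; omega

def canonCh : Proc Act → List (Act × Obs Act Unit)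
  | .nil => []
  | .pre a p => [(a, Obs.node () (canonCh p))]
  | .choice p q => canonCh p ++ canonCh q

def canon (p : Proc Act) : Obs Act Unit := Obs.node () (canonCh p)

theorem mem_canonCh {p : Proc Act} {a : Act} {b : Obs Act Unit} :
    (a, b) ∈ canonCh p ↔ ∃ p', Proc.Step p a p' ∧ b = canon p' := by
  induction p with
  | nil =>
    simp only [canonCh, List.not_mem_nil, false_iff]
    rintro ⟨p', h, -⟩; cases h
  | pre c q ih =>
    simp only [canonCh, List.mem_singleton, Prod.mk.injEq, canon]
    constructor
    · rintro ⟨rfl, rfl⟩; exact ⟨q, .pre _ q, rfl⟩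
    · rintro ⟨p', h, rfl⟩; cases h; exact ⟨rfl, rfl⟩
  | choice q r ihq ihr =>
    simp only [canonCh, List.mem_append, ihq, ihr]
    constructor
    · rintro (⟨p', h, rfl⟩ | ⟨p', h, rfl⟩)
      exacts [⟨p', .left _ h, rfl⟩, ⟨p', .right _ h, rfl⟩]
    · rintro ⟨p', h, rfl⟩
      cases h with
      | left _ h => exact Or.inl ⟨_, h, rfl⟩
      | right _ h => exact Or.inr ⟨_, h, rfl⟩

theorem inBGO_node {Λ : Type} {L : Proc Act → Λ} {l : Λ}
    {T : List (Act × Obs Act Λ)} {p : Proc Act} :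
    InBGO L (Obs.node l T) p ↔
      (l = L p ∧ ∀ a b, (a, b) ∈ T → ∃ p', Proc.Step p a p' ∧ InBGO L b p') := by
  rw [InBGO]

theorem detObs_node {Λ : Type} {l : Λ} {T : List (Act × Obs Act Λ)} :
    DetObs (Obs.node l T) ↔
      ((∀ x ∈ T, ∀ y ∈ T, x.1 = y.1 → x.2 = y.2) ∧
        ∀ a b, (a, b) ∈ T → DetObs b) := by
  rw [DetObs]

theorem inBGO_of_sim {S : Proc Act → Proc Act → Prop} (hS : IsSim S) :
    ∀ (b : Obs Act Unit) (p q : Proc Act), S p q → InBGO LU b p → InBGO LU b q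
  | Obs.node l T => fun p q hpq hb => by
    rw [inBGO_node] at hb ⊢
    refine ⟨Subsingleton.elim _ _, fun a b' hmem => ?_⟩
    obtain ⟨p', hstep, hb'⟩ := hb.2 a b' hmem
    obtain ⟨q', hqstep, hS'⟩ := hS p q hpq a p' hstep
    exact ⟨q', hqstep, inBGO_of_sim hS b' p' q' hS' hb'⟩
termination_by b => sizeOf b
decreasing_by
  have h1 : sizeOf (a, b') < sizeOf T := List.sizeOf_lt_of_mem hmem
  simp at h1 ⊢; omega

theorem inBGO_canon : ∀ (p : Proc Act), InBGO LU (canon p) p := fun p => by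
  rw [canon, inBGO_node]
  refine ⟨rfl, fun a b hmem => ?_⟩
  obtain ⟨p', hstep, rfl⟩ := mem_canonCh.mp hmem
  exact ⟨p', hstep, inBGO_canon p'⟩
termination_by p => sizeOf p
decreasing_by exact step_sizeOf hstep

theorem sle_of_inBGO_canon {p q : Proc Act} (h : InBGO LU (canon p) q) : Sle p q := by
  refine ⟨fun r s => InBGO LU (canon r) s, ?_, h⟩
  intro r s hrs a r' hstep
  rw [canon, inBGO_node] at hrs
  exact hrs.2 a (canon r') (mem_canonCh.mpr ⟨r', hstep, rfl⟩)

theorem det_step {p p' : Proc Act} {a : Act} (hd : Deterministic p)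
    (h : Proc.Step p a p') : Deterministic p' :=
  fun α r hsteps => hd (a :: α) r (.cons h hsteps)

theorem det_of_head {p : Proc Act}
    (h1 : ∀ a (r₁ r₂ : Proc Act), Proc.Step p a r₁ → Proc.Step p a r₂ → r₁ = r₂)
    (h2 : ∀ a p', Proc.Step p a p' → Deterministic p') : Deterministic p := by
  intro α r hsteps
  cases hsteps with
  | refl => exact h1
  | cons hstep hsteps => exact h2 _ _ hstep _ _ hsteps

theorem det_head {p : Proc Act} (hd : Deterministic p) :
    ∀ a (r₁ r₂ : Proc Act), Proc.Step p a r₁ → Proc.Step p a r₂ → r₁ = r₂ :=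
  hd [] p (.refl p)

theorem detObs_canon : ∀ (p : Proc Act), Deterministic p → DetObs (canon p) :=
  fun p hd => by
  rw [canon, detObs_node]
  constructor
  · rintro ⟨a, b⟩ hx ⟨a', b'⟩ hy (rfl : a = a')
    obtain ⟨p', hs, rfl⟩ := mem_canonCh.mp hx
    obtain ⟨p'', hs', rfl⟩ := mem_canonCh.mp hy
    simp only
    rw [det_head hd a _ _ hs hs']
  · intro a b hmem
    obtain ⟨p', hs, rfl⟩ := mem_canonCh.mp hmem
    exact detObs_canon p' (det_step hd hs)
termination_by p => sizeOf p
decreasing_by exact step_sizeOf hs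

mutual
def ofObs : Obs Act Unit → Proc Act
  | .node _ T => ofList T
def ofList : List (Act × Obs Act Unit) → Proc Act
  | [] => .nil
  | (a, b) :: rest => .choice (.pre a (ofObs b)) (ofList rest)
end

theorem step_ofList {T : List (Act × Obs Act Unit)} {a : Act} {r : Proc Act} :
    Proc.Step (ofList T) a r ↔ ∃ b, (a, b) ∈ T ∧ r = ofObs b := by
  induction T with
  | nil =>
    simp only [ofList, List.not_mem_nil, false_and, exists_false, iff_false]
    intro h; cases h
  | cons hd tl ih =>
    obtain ⟨c, b⟩ := hd
    simp only [ofList, List.mem_cons, Prod.mk.injEq]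
    constructor
    · intro h
      cases h with
      | left _ h => cases h; exact ⟨b, Or.inl ⟨rfl, rfl⟩, rfl⟩
      | right _ h =>
        obtain ⟨b', hm, rfl⟩ := ih.mp h
        exact ⟨b', Or.inr hm, rfl⟩
    · rintro ⟨b', (⟨rfl, rfl⟩ | hm), rfl⟩
      · exact .left _ (.pre _ (ofObs b'))
      · exact .right _ (ih.mpr ⟨b', hm, rfl⟩)

theorem inBGO_ofObs : ∀ (b : Obs Act Unit), InBGO LU b (ofObs b)
  | .node l T => by
    rw [inBGO_node]
    refine ⟨Subsingleton.elim _ _, fun a b' hmem => ?_⟩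
    exact ⟨ofObs b', step_ofList.mpr ⟨b', hmem, rfl⟩, inBGO_ofObs b'⟩
termination_by b => sizeOf b
decreasing_by
  have h1 : sizeOf (a, b') < sizeOf T := List.sizeOf_lt_of_mem hmem
  simp at h1 ⊢; omega

theorem det_ofObs : ∀ (b : Obs Act Unit), DetObs b → Deterministic (ofObs b)
  | .node l T => fun hdet => by
    rw [detObs_node] at hdet
    apply det_of_head
    · intro a r₁ r₂ h1 h2
      obtain ⟨b₁, hm1, rfl⟩ := step_ofList.mp h1
      obtain ⟨b₂, hm2, rfl⟩ := step_ofList.mp h2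
      have : b₁ = b₂ := hdet.1 (a, b₁) hm1 (a, b₂) hm2 rfl
      rw [this]
    · intro a p' hstep
      obtain ⟨b', hm, rfl⟩ := step_ofList.mp hstep
      exact det_ofObs b' (hdet.2 a b' hm)
termination_by b => sizeOf b
decreasing_by
  have h1 : sizeOf (a, b') < sizeOf T := List.sizeOf_lt_of_mem hm
  simp at h1 ⊢; omega

theorem sle_ofObs {b : Obs Act Unit} {p : Proc Act} (h : InBGO LU b p) :
    Sle (ofObs b) p := by
  refine ⟨fun r s => ∃ b', r = ofObs b' ∧ InBGO LU b' s, ?_, ⟨b, rfl, h⟩⟩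
  rintro r s ⟨b', rfl, hb⟩ a r' hstep
  obtain ⟨l, T⟩ := b'
  rw [inBGO_node] at hb
  obtain ⟨b'', hmem, rfl⟩ := step_ofList.mp hstep
  obtain ⟨s', hs, hb''⟩ := hb.2 a b'' hmem
  exact ⟨s', hs, b'', rfl, hb''⟩

end Aux

/-- `p₁ ⊑_UPW p₂` (i.e. `PW_U(p₁) ⊆ PW_U(p₂)`) iff
`dBGO_U(p₁) ⊆ dBGO_U(p₂)`. -/
theorem stmt12 {Act : Type} (p₁ p₂ : Proc Act) :
    PWU p₁ ⊆ PWU p₂ ↔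
      {b | InBGO LU b p₁ ∧ DetObs b} ⊆ {b | InBGO LU b p₂ ∧ DetObs b} := by
  constructor
  · rintro hpw b ⟨hb, hdet⟩
    have hmem : ofObs b ∈ PWU p₁ := ⟨det_ofObs b hdet, sle_ofObs hb⟩
    obtain ⟨-, S, hS, hSb⟩ := hpw hmem
    exact ⟨inBGO_of_sim hS b _ _ hSb (inBGO_ofObs b), hdet⟩
  · rintro hobs q ⟨hdq, S, hS, hSq⟩
    have h1 : InBGO LU (canon q) p₁ :=
      inBGO_of_sim hS (canon q) q p₁ hSq (inBGO_canon q)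
    have h2 := hobs ⟨h1, detObs_canon q hdq⟩
    exact ⟨hdq, sle_of_inBGO_canon h2.1⟩
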